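/- arXiv:1702.06678 — 2 statements merged into one kernel-verified Lean document; each statement's English description precedes it below -/
import Mathlib

section
/- Let Ω ⊆ ℝⁿ be an open convex set and let φ : Ω → ℝ be a smooth convex function satisfying det Hess φ(x) = e^{2φ(x)} for all x ∈ Ω and φ(x) → ∞ as x tends to the boundary ∂Ω. Assume φ is the unique such function, i.e., any smooth convex ψ : Ω → ℝ with det Hess ψ = e^{2ψ} on Ω and ψ(x) → ∞ as x → ∂Ω equals φ. Let A(x) = a·x + b be an affine transformation of ℝⁿ with a invertible such that A(Ω) = Ω. Then φ(x) = φ(A x) + log |det a| for all x ∈ Ω, and consequently Hess φ(x) = aᵀ · (Hess φ)(A x) · a for all x ∈ Ω (i.e., the Hessian metric g = Hess φ is invariant under the affine automorphism A). -/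
open Real Matrix Filter

/-- The `i`-th partial derivative of `f : ℝⁿ → ℝ`. -/
noncomputable def pd {n : ℕ} (i : Fin n) (f : (Fin n → ℝ) → ℝ) (x : Fin n → ℝ) : ℝ :=
  fderiv ℝ f x (Pi.single i 1)

/-- The Hessian matrix of `φ : ℝⁿ → ℝ` at `x`, with `(i,j)` entry `∂²φ/∂xⁱ∂xʲ(x)`. -/
noncomputable def hess {n : ℕ} (φ : (Fin n → ℝ) → ℝ) (x : Fin n → ℝ) :
    Matrix (Fin n) (Fin n) ℝ :=
  Matrix.of fun i j => pd i (fun y => pd j φ y) x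

lemma pd_congr_nhds {n : ℕ} {f g : (Fin n → ℝ) → ℝ} {x : Fin n → ℝ}
    (h : f =ᶠ[nhds x] g) (i : Fin n) : pd i f x = pd i g x := by
  unfold pd; rw [h.fderiv_eq]

lemma pd_differentiableAt {n : ℕ} {f : (Fin n → ℝ) → ℝ} {x : Fin n → ℝ}
    (hf : ContDiffAt ℝ (⊤ : ℕ∞) f x) (k : Fin n) : DifferentiableAt ℝ (pd k f) x := by
  have h1 : ContDiffAt ℝ (⊤ : ℕ∞) (fderiv ℝ f) x := hf.fderiv_right (by simp)
  exact ((ContinuousLinearMap.apply ℝ ℝ (Pi.single k (1:ℝ))).differentiableAt).comp x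
    (h1.differentiableAt (by simp))

lemma hasFDerivAt_affine {n : ℕ} (a : Matrix (Fin n) (Fin n) ℝ) (b : Fin n → ℝ)
    (A : (Fin n → ℝ) → (Fin n → ℝ)) (hA : ∀ x, A x = a.mulVec x + b) (x : Fin n → ℝ) :
    HasFDerivAt A (LinearMap.toContinuousLinearMap a.mulVecLin) x := by
  have : A = fun y => (LinearMap.toContinuousLinearMap a.mulVecLin) y + b := by
    funext y; simp [hA y]
  rw [this]
  exact ((LinearMap.toContinuousLinearMap a.mulVecLin).hasFDerivAt).add_const b

lemma mulVec_single_eq_sum {n : ℕ} (a : Matrix (Fin n) (Fin n) ℝ) (j : Fin n) :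
    a.mulVec (Pi.single j 1) = ∑ k, (a k j) • (Pi.single k (1:ℝ) : Fin n → ℝ) := by
  funext l
  simp [Matrix.mulVec, dotProduct, Pi.single_apply, Finset.sum_apply, mul_ite, eq_comm]

lemma pd_comp_affine {n : ℕ} (a : Matrix (Fin n) (Fin n) ℝ) (b : Fin n → ℝ)
    (A : (Fin n → ℝ) → (Fin n → ℝ)) (hA : ∀ x, A x = a.mulVec x + b)
    {f : (Fin n → ℝ) → ℝ} {x : Fin n → ℝ} (hf : DifferentiableAt ℝ f (A x)) (j : Fin n) :
    pd j (fun y => f (A y)) x = ∑ k, a k j * pd k f (A x) := by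
  have hL := hasFDerivAt_affine a b A hA x
  have h1 : HasFDerivAt (fun y => f (A y))
      ((fderiv ℝ f (A x)).comp (LinearMap.toContinuousLinearMap a.mulVecLin)) x :=
    (hf.hasFDerivAt).comp x hL
  unfold pd
  rw [h1.fderiv]
  simp only [ContinuousLinearMap.comp_apply, LinearMap.coe_toContinuousLinearMap',
    Matrix.mulVecLin_apply]
  rw [mulVec_single_eq_sum, map_sum]
  simp [smul_eq_mul]

lemma hess_comp_affine {n : ℕ} {Ω : Set (Fin n → ℝ)} (hΩ : IsOpen Ω)
    {φ : (Fin n → ℝ) → ℝ} (hφs : ContDiffOn ℝ (⊤ : ℕ∞) φ Ω)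
    (a : Matrix (Fin n) (Fin n) ℝ) (b : Fin n → ℝ)
    (A : (Fin n → ℝ) → (Fin n → ℝ)) (hA : ∀ x, A x = a.mulVec x + b)
    (hmaps : Set.MapsTo A Ω Ω) (c : ℝ) {x : Fin n → ℝ} (hx : x ∈ Ω) :
    hess (fun y => φ (A y) + c) x = aᵀ * hess φ (A x) * a := by
  have hAx : A x ∈ Ω := hmaps hx
  have hφAx : ContDiffAt ℝ (⊤ : ℕ∞) φ (A x) := hφs.contDiffAt (hΩ.mem_nhds hAx)
  have key : ∀ j : Fin n, ∀ y ∈ Ω,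
      pd j (fun z => φ (A z) + c) y = ∑ k, a k j * pd k φ (A y) := by
    intro j y hy
    have h1 : pd j (fun z => φ (A z) + c) y = pd j (fun z => φ (A z)) y := by
      unfold pd; rw [fderiv_add_const]
    rw [h1]
    exact pd_comp_affine a b A hA
      ((hφs.contDiffAt (hΩ.mem_nhds (hmaps hy))).differentiableAt (by simp)) j
  ext i j
  show pd i (fun y => pd j (fun z => φ (A z) + c) y) x = _
  have hev : (fun y => pd j (fun z => φ (A z) + c) y)
      =ᶠ[nhds x] (fun y => ∑ k, a k j * pd k φ (A y)) := by
    filter_upwards [hΩ.mem_nhds hx] with y hy using key j y hy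
  rw [pd_congr_nhds hev i]
  have hdiff : ∀ k : Fin n, DifferentiableAt ℝ (fun y => pd k φ (A y)) x :=
    fun k => ((pd_differentiableAt hφAx k).comp x (hasFDerivAt_affine a b A hA x).differentiableAt)
  have hsum : pd i (fun y => ∑ k, a k j * pd k φ (A y)) x
      = ∑ k, a k j * pd i (fun y => pd k φ (A y)) x := by
    have H : HasFDerivAt (fun y => ∑ k : Fin n, a k j * pd k φ (A y))
        (∑ k : Fin n, a k j • fderiv ℝ (fun y => pd k φ (A y)) x) x :=
      HasFDerivAt.fun_sum fun k _ => ((hdiff k).hasFDerivAt.const_mul (a k j))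
    show (fderiv ℝ (fun y => ∑ k : Fin n, a k j * pd k φ (A y)) x) (Pi.single i 1) = _
    rw [H.fderiv, ContinuousLinearMap.sum_apply]
    simp [pd, smul_eq_mul]
  rw [hsum]
  have hterm : ∀ k : Fin n, pd i (fun y => pd k φ (A y)) x
      = ∑ l, a l i * pd l (pd k φ) (A x) :=
    fun k => pd_comp_affine a b A hA (pd_differentiableAt hφAx k) i
  simp only [hterm]
  simp only [Matrix.mul_apply, Matrix.transpose_apply, hess, Matrix.of_apply]
  refine Finset.sum_congr rfl fun k _ => ?_
  rw [mul_comm]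

theorem stmt1 {n : ℕ} (Ω : Set (Fin n → ℝ)) (hΩ : IsOpen Ω) (hconv : Convex ℝ Ω)
    (φ : (Fin n → ℝ) → ℝ)
    (hφs : ContDiffOn ℝ (⊤ : ℕ∞) φ Ω) (hφc : ConvexOn ℝ Ω φ)
    (hMA : ∀ x ∈ Ω, (hess φ x).det = Real.exp (2 * φ x))
    (hblow : ∀ y ∈ frontier Ω, Tendsto φ (nhdsWithin y Ω) atTop)
    (huniq : ∀ ψ : (Fin n → ℝ) → ℝ, ContDiffOn ℝ (⊤ : ℕ∞) ψ Ω → ConvexOn ℝ Ω ψ →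
      (∀ x ∈ Ω, (hess ψ x).det = Real.exp (2 * ψ x)) →
      (∀ y ∈ frontier Ω, Tendsto ψ (nhdsWithin y Ω) atTop) → Set.EqOn ψ φ Ω)
    (a : Matrix (Fin n) (Fin n) ℝ) (ha : IsUnit a.det) (b : Fin n → ℝ)
    (A : (Fin n → ℝ) → (Fin n → ℝ)) (hA : ∀ x, A x = a.mulVec x + b)
    (hAΩ : A '' Ω = Ω) :
    ∀ x ∈ Ω,
      φ x = φ (A x) + Real.log |a.det| ∧
      hess φ x = aᵀ * hess φ (A x) * a := by
  have hdet0 : a.det ≠ 0 := ha.ne_zero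
  have hmaps : Set.MapsTo A Ω Ω := fun z hz => hAΩ ▸ Set.mem_image_of_mem A hz
  have hAcont : Continuous A := by
    have : A = fun y => (LinearMap.toContinuousLinearMap a.mulVecLin) y + b := by
      funext y; simp [hA y]
    rw [this]
    exact ((LinearMap.toContinuousLinearMap a.mulVecLin).continuous).add continuous_const
  -- inverse map
  have hleft : ∀ z, a⁻¹.mulVec (A z - b) = z := by
    intro z
    rw [hA z]
    simp [Matrix.mulVec_mulVec, Matrix.nonsing_inv_mul a ha]
  have hright : ∀ z, A (a⁻¹.mulVec (z - b)) = z := by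
    intro z
    rw [hA]
    simp [Matrix.mulVec_mulVec, Matrix.mul_nonsing_inv a ha]
  have hBcont : Continuous (fun z : Fin n → ℝ => a⁻¹.mulVec (z - b)) := by
    have h1 := (LinearMap.toContinuousLinearMap (a⁻¹).mulVecLin).continuous
    exact h1.comp (continuous_id.sub continuous_const)
  let e : (Fin n → ℝ) ≃ₜ (Fin n → ℝ) :=
  { toFun := A
    invFun := fun z => a⁻¹.mulVec (z - b)
    left_inv := fun z => by simpa using hleft z
    right_inv := hright
    continuous_toFun := hAcont
    continuous_invFun := hBcont }
  have hApre : A ⁻¹' Ω = Ω := by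
    ext z
    constructor
    · intro hz
      rcases hAΩ ▸ (hz : A z ∈ Ω) with ⟨w, hw, hwz⟩
      have : w = z := e.injective hwz
      exact this ▸ hw
    · exact fun hz => hmaps hz
  set c := Real.log |a.det| with hc
  set ψ : (Fin n → ℝ) → ℝ := fun x => φ (A x) + c with hψdef
  -- smoothness
  have hAsm : ContDiff ℝ (⊤ : ℕ∞) A := by
    have : A = fun y => (LinearMap.toContinuousLinearMap a.mulVecLin) y + b := by
      funext y; simp [hA y]
    rw [this]
    exact ((LinearMap.toContinuousLinearMap a.mulVecLin).contDiff).add contDiff_const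
  have hψs : ContDiffOn ℝ (⊤ : ℕ∞) ψ Ω :=
    ((hφs.comp hAsm.contDiffOn hmaps).add contDiffOn_const)
  -- convexity
  have hψc : ConvexOn ℝ Ω ψ := by
    have haff : ∀ p' : Fin n → ℝ, A p' = a.mulVecLin (p' -ᵥ 0) +ᵥ A 0 := by
      intro p'
      simp [hA, Matrix.mulVec_zero]
    let Aff : (Fin n → ℝ) →ᵃ[ℝ] (Fin n → ℝ) := AffineMap.mk' A a.mulVecLin 0 haff
    have h1 := hφc.comp_affineMap Aff
    have h2 : ⇑Aff = A := rfl
    rw [h2, hApre] at h1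
    exact h1.add_const c
  -- Monge-Ampère equation
  have hψMA : ∀ x ∈ Ω, (hess ψ x).det = Real.exp (2 * ψ x) := by
    intro x hx
    have hh : hess ψ x = aᵀ * hess φ (A x) * a :=
      hess_comp_affine hΩ hφs a b A hA hmaps c hx
    rw [hh, Matrix.det_mul, Matrix.det_mul, Matrix.det_transpose, hMA _ (hmaps hx)]
    have hexp : Real.exp (2 * ψ x) = Real.exp (2 * φ (A x)) * (a.det * a.det) := by
      have : 2 * ψ x = 2 * φ (A x) + (c + c) := by simp [hψdef]; ring
      rw [this, Real.exp_add, Real.exp_add, hc, Real.exp_log (abs_pos.mpr hdet0),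
        abs_mul_abs_self]
    rw [hexp]; ring
  -- blow-up
  have hψblow : ∀ y ∈ frontier Ω, Tendsto ψ (nhdsWithin y Ω) atTop := by
    intro y hy
    have hyA : A y ∈ frontier Ω := by
      have h1 : (⇑e) '' frontier Ω = frontier ((⇑e) '' Ω) := e.image_frontier Ω
      have h2 : (⇑e) '' Ω = Ω := hAΩ
      rw [h2] at h1
      exact h1 ▸ Set.mem_image_of_mem _ hy
    have hten : Tendsto A (nhdsWithin y Ω) (nhdsWithin (A y) Ω) :=
      (hAcont.continuousWithinAt).tendsto_nhdsWithin hmaps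
    exact tendsto_atTop_add_const_right _ c ((hblow (A y) hyA).comp hten)
  have heq : Set.EqOn ψ φ Ω := huniq ψ hψs hψc hψMA hψblow
  intro x hx
  refine ⟨(heq hx).symm, ?_⟩
  have h2 : hess φ x = hess ψ x := by
    ext i j
    show pd i (fun y => pd j φ y) x = pd i (fun y => pd j ψ y) x
    have hev1 : ∀ z ∈ Ω, pd j φ z = pd j ψ z := by
      intro z hz
      refine pd_congr_nhds ?_ j
      filter_upwards [hΩ.mem_nhds hz] with w hw using (heq hw).symm
    refine pd_congr_nhds ?_ i
    filter_upwards [hΩ.mem_nhds hx] with z hz using hev1 z hz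
  rw [h2]
  exact hess_comp_affine hΩ hφs a b A hA hmaps c hx
end

section
/- Let Ω ⊆ ℝⁿ be an open convex cone (i.e., x ∈ Ω and t > 0 imply t·x ∈ Ω) and let φ : Ω → ℝ be a smooth convex function satisfying det Hess φ(x) = e^{2φ(x)} for all x ∈ Ω and φ(x) → ∞ as x tends to the boundary ∂Ω. Assume φ is the unique such function, i.e., any smooth convex ψ : Ω → ℝ with det Hess ψ = e^{2ψ} on Ω and ψ(x) → ∞ as x → ∂Ω equals φ. Then φ is logarithmically homogeneous of degree −n: φ(t·x) = φ(x) − n·log t for all t > 0 and x ∈ Ω. -/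
open Real Matrix Filter

lemma fderiv_comp_smul_aux {n : ℕ} (f : (Fin n → ℝ) → ℝ) {t : ℝ} {x : Fin n → ℝ}
    (hf : DifferentiableAt ℝ f (t • x)) (v : Fin n → ℝ) :
    fderiv ℝ (fun y => f (t • y)) x v = t * fderiv ℝ f (t • x) v := by
  have hL : (fun y : Fin n → ℝ => f (t • y)) = f ∘ (t • ContinuousLinearMap.id ℝ (Fin n → ℝ)) := by
    ext y; simp
  rw [hL, fderiv_comp x (by simpa using hf)
    ((t • ContinuousLinearMap.id ℝ (Fin n → ℝ)).differentiableAt),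
    ContinuousLinearMap.fderiv]
  simp [ContinuousLinearMap.smul_apply, _root_.map_smul]

theorem stmt2 {n : ℕ} (Ω : Set (Fin n → ℝ)) (hΩ : IsOpen Ω) (hconv : Convex ℝ Ω)
    (hcone : ∀ x ∈ Ω, ∀ t : ℝ, 0 < t → t • x ∈ Ω)
    (φ : (Fin n → ℝ) → ℝ)
    (hφs : ContDiffOn ℝ (⊤ : ℕ∞) φ Ω) (hφc : ConvexOn ℝ Ω φ)
    (hMA : ∀ x ∈ Ω, (hess φ x).det = Real.exp (2 * φ x))
    (hblow : ∀ y ∈ frontier Ω, Tendsto φ (nhdsWithin y Ω) atTop)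
    (huniq : ∀ ψ : (Fin n → ℝ) → ℝ, ContDiffOn ℝ (⊤ : ℕ∞) ψ Ω → ConvexOn ℝ Ω ψ →
      (∀ x ∈ Ω, (hess ψ x).det = Real.exp (2 * ψ x)) →
      (∀ y ∈ frontier Ω, Tendsto ψ (nhdsWithin y Ω) atTop) → Set.EqOn ψ φ Ω) :
    ∀ x ∈ Ω, ∀ t : ℝ, 0 < t → φ (t • x) = φ x - n * Real.log t := by
  intro x hx t ht
  set c : ℝ := n * Real.log t with hc
  set ψ : (Fin n → ℝ) → ℝ := fun y => φ (t • y) + c with hψ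
  have hmap : ∀ y ∈ Ω, t • y ∈ Ω := fun y hy => hcone y hy t ht
  -- differentiability facts
  have hφ_at : ∀ z ∈ Ω, ContDiffAt ℝ (⊤ : ℕ∞) φ z := fun z hz => hφs.contDiffAt (hΩ.mem_nhds hz)
  have hpd_cd : ∀ (j : Fin n), ∀ z ∈ Ω, ContDiffAt ℝ (⊤ : ℕ∞) (fun w => pd j φ w) z := by
    intro j z hz
    exact ((hφ_at z hz).fderiv_right (by simp)).clm_apply contDiffAt_const
  have hsmul_diff : ∀ y : Fin n → ℝ, DifferentiableAt ℝ (fun z : Fin n → ℝ => t • z) y :=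
    fun y => (differentiableAt_id).const_smul t
  -- smoothness of ψ
  have hψs : ContDiffOn ℝ (⊤ : ℕ∞) ψ Ω := by
    have h1 : ContDiffOn ℝ (⊤ : ℕ∞) (fun y => φ (t • y)) Ω := by
      refine hφs.comp ?_ hmap
      exact (contDiff_const_smul t).contDiffOn
    exact h1.add contDiffOn_const
  -- convexity of ψ
  have hψc : ConvexOn ℝ Ω ψ := by
    refine ⟨hconv, fun y hy z hz a b ha hb hab => ?_⟩
    have h := hφc.2 (hmap y hy) (hmap z hz) ha hb hab
    have hts : t • (a • y + b • z) = a • (t • y) + b • (t • z) := by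
      rw [smul_add, smul_comm t a, smul_comm t b]
    have hcc : a * c + b * c = c := by rw [← add_mul, hab, one_mul]
    simp only [hψ, hts, smul_eq_mul] at h ⊢
    nlinarith [h, hcc]
  -- Hessian computation
  have hhess : ∀ y ∈ Ω, ∀ i j : Fin n, hess ψ y i j = t ^ 2 * hess φ (t • y) i j := by
    intro y hy i j
    have heq : (fun z => fderiv ℝ ψ z (Pi.single j 1)) =ᶠ[nhds y]
        (fun z => t * fderiv ℝ φ (t • z) (Pi.single j 1)) := by
      filter_upwards [hΩ.mem_nhds hy] with z hz
      have hdz : DifferentiableAt ℝ φ (t • z) :=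
        ((hφ_at _ (hmap z hz)).differentiableAt (by simp))
      have h1 : fderiv ℝ ψ z = fderiv ℝ (fun w => φ (t • w)) z := by
        simp only [hψ]
        exact fderiv_add_const c
      rw [h1, fderiv_comp_smul_aux φ hdz]
    have hgd : DifferentiableAt ℝ (fun z => fderiv ℝ φ (t • z) (Pi.single j 1)) y := by
      exact (((hpd_cd j _ (hmap y hy)).differentiableAt (by simp))).comp y (hsmul_diff y)
    show pd i (fun z => pd j ψ z) y = t ^ 2 * pd i (fun z => pd j φ z) (t • y)
    unfold pd
    rw [heq.fderiv_eq, fderiv_const_mul hgd t]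
    simp only [ContinuousLinearMap.coe_smul', Pi.smul_apply, smul_eq_mul]
    rw [fderiv_comp_smul_aux (fun w => fderiv ℝ φ w (Pi.single j 1))
      ((hpd_cd j _ (hmap y hy)).differentiableAt (by simp))]
    ring
  -- Monge-Ampère equation for ψ
  have hψMA : ∀ y ∈ Ω, (hess ψ y).det = Real.exp (2 * ψ y) := by
    intro y hy
    have hm : hess ψ y = (t ^ 2) • hess φ (t • y) := by
      ext i j
      simpa using hhess y hy i j
    rw [hm, Matrix.det_smul, hMA _ (hmap y hy), Fintype.card_fin]
    have ht2 : (t ^ 2) ^ n = Real.exp (2 * c) := by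
      rw [hc]
      rw [show (2 : ℝ) * (n * Real.log t) = (2 * n : ℕ) * Real.log t by push_cast; ring]
      rw [Real.exp_nat_mul, Real.exp_log ht]
      ring
    rw [ht2, ← Real.exp_add]
    congr 1
    simp only [hψ]
    ring
  -- blow-up for ψ
  have hψblow : ∀ y ∈ frontier Ω, Tendsto ψ (nhdsWithin y Ω) atTop := by
    intro y hy
    have e : (Fin n → ℝ) ≃ₜ (Fin n → ℝ) := Homeomorph.smulOfNeZero t ht.ne'
    have himg : (t • ·) '' Ω = Ω := by
      apply subset_antisymm
      · rintro _ ⟨z, hz, rfl⟩; exact hmap z hz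
      · intro z hz
        refine ⟨t⁻¹ • z, hcone z hz t⁻¹ (inv_pos.mpr ht), ?_⟩
        simp [smul_smul, mul_inv_cancel₀ ht.ne']
    have hfr : t • y ∈ frontier Ω := by
      have := (Homeomorph.smulOfNeZero t ht.ne' : (Fin n → ℝ) ≃ₜ (Fin n → ℝ)).image_frontier Ω
      have hy' : t • y ∈ (Homeomorph.smulOfNeZero t ht.ne') '' frontier Ω :=
        ⟨y, hy, rfl⟩
      rw [this] at hy'
      have : ⇑(Homeomorph.smulOfNeZero t ht.ne' : (Fin n → ℝ) ≃ₜ (Fin n → ℝ)) '' Ω = Ω := himg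
      rwa [this] at hy'
    have h1 : Tendsto (fun z : Fin n → ℝ => t • z) (nhdsWithin y Ω) (nhdsWithin (t • y) Ω) := by
      refine ((continuous_const_smul t).continuousWithinAt).tendsto_nhdsWithin ?_
      intro z hz; exact hmap z hz
    have h2 : Tendsto (fun z => φ (t • z)) (nhdsWithin y Ω) atTop :=
      (hblow _ hfr).comp h1
    simpa only [hψ] using tendsto_atTop_add_const_right _ c h2
  have hkey := huniq ψ hψs hψc hψMA hψblow hx
  simp only [hψ] at hkey
  linarith
end
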